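/- arXiv:1103.1689 — 2 statements merged into one kernel-verified Lean document; each statement's English description precedes it below -/
import Mathlib

section
/- Let G(k,z) = -((k-2)·z - k·√(z² - 4k + 4)) / (2·(z² - k²)) for z > 2√(k-1), and define Q(a,k,ρ) = ρ + 2a√(k-1) - a/G(k, ρ/a + 2√(k-1)). Then lim_{ρ→∞} ρ·Q(a,k,ρ) = k·a², for every a > 0 and integer k ≥ 3. -/
/-!
Rationalising the denominator of `G`, via `(kw - (k-2)z)(kw + (k-2)z) = 4(k-1)(z² - k²)` for
`w = √(z² - 4k + 4)`, gives `1 / G k z = (kw + (k-2)z) / (2(k-1))`. For `z = ρ/a + 2√(k-1)` this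
turns `Q` into `ak(z - w) / (2(k-1)) = 2ak / (z + w)`, so `ρ Q = 2a²k (z - 2√(k-1)) / (z + w)`,
which tends to `k a²` because `w ~ z` as `z → ∞`.
-/

noncomputable def G (k : ℕ) (z : ℝ) : ℝ :=
  -(((k : ℝ) - 2) * z - k * Real.sqrt (z ^ 2 - 4 * k + 4)) / (2 * (z ^ 2 - (k : ℝ) ^ 2))

noncomputable def Q (a : ℝ) (k : ℕ) (ρ : ℝ) : ℝ :=
  ρ + 2 * a * Real.sqrt ((k : ℝ) - 1) - a / G k (ρ / a + 2 * Real.sqrt ((k : ℝ) - 1))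

open Filter Topology Real

lemma tendsto_sub_div_add_sqrt_sq_sub (c d : ℝ) :
    Tendsto (fun z => (z - c) / (z + √(z ^ 2 - d))) atTop (𝓝 (1 / 2)) := by
  have hinv : Tendsto (fun z : ℝ => z⁻¹) atTop (𝓝 0) := tendsto_inv_atTop_zero
  have hsqrt : Tendsto (fun z : ℝ => √(1 - d * z⁻¹ ^ 2)) atTop (𝓝 1) := by
    simpa using ((tendsto_const_nhds (x := (1 : ℝ))).sub ((hinv.pow 2).const_mul d)).sqrt
  have hlim : Tendsto (fun z => (1 - c * z⁻¹) / (1 + √(1 - d * z⁻¹ ^ 2))) atTop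
      (𝓝 ((1 - c * 0) / (1 + 1))) :=
    (tendsto_const_nhds.sub (hinv.const_mul c)).div (tendsto_const_nhds.add hsqrt) (by norm_num)
  rw [show (1 - c * 0) / (1 + 1 : ℝ) = 1 / 2 by norm_num] at hlim
  refine hlim.congr' ?_
  filter_upwards [eventually_gt_atTop 0] with z hz
  have hsq : √(1 - d * z⁻¹ ^ 2) = √(z ^ 2 - d) / z := by
    rw [← sqrt_sq hz.le, ← sqrt_div' _ (sq_nonneg z), sqrt_sq hz.le]
    congr 1
    field_simp
  rw [hsq]
  field_simp

lemma inv_G (k : ℕ) (z : ℝ) (hk : 2 ≤ k) (hz : (k : ℝ) ^ 2 < z ^ 2) :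
    (G k z)⁻¹ = (k * √(z ^ 2 - 4 * k + 4) + (k - 2) * z) / (2 * (k - 1)) := by
  have hk' : (2 : ℝ) ≤ k := by exact_mod_cast hk
  unfold G
  set w := √(z ^ 2 - 4 * k + 4)
  have hw : w ^ 2 = z ^ 2 - 4 * k + 4 := sq_sqrt (by nlinarith)
  have hk1 : (k : ℝ) - 1 ≠ 0 := by linarith
  have hzk : z ^ 2 - (k : ℝ) ^ 2 ≠ 0 := by linarith
  refine inv_eq_of_mul_eq_one_right ?_
  field_simp
  linear_combination (k : ℝ) ^ 2 * hw

lemma Q_eq_div_add_sqrt (a : ℝ) (ha : a ≠ 0) (k : ℕ) (hk : 2 ≤ k) (ρ z : ℝ)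
    (hz : ρ / a + 2 * √((k : ℝ) - 1) = z) (hkz : (k : ℝ) < z) :
    Q a k ρ = 2 * a * k / (z + √(z ^ 2 - 4 * k + 4)) := by
  have hk' : (2 : ℝ) ≤ k := by exact_mod_cast hk
  have hρ : ρ + 2 * a * √((k : ℝ) - 1) = a * z := by rw [← hz]; field_simp
  rw [Q, hz, div_eq_mul_inv, inv_G k z hk (by nlinarith), hρ]
  set w := √(z ^ 2 - 4 * k + 4)
  have hw : w ^ 2 = z ^ 2 - 4 * k + 4 := sq_sqrt (by nlinarith)
  have hzw : z + w ≠ 0 := by have : 0 ≤ w := sqrt_nonneg _; linarith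
  have hk1 : (k : ℝ) - 1 ≠ 0 := by linarith
  field_simp
  linear_combination (-(k : ℝ)) * hw

theorem Q_limit_rho_infty (a : ℝ) (ha : 0 < a) (k : ℕ) (hk : 3 ≤ k) :
    Filter.Tendsto (fun ρ => ρ * Q a k ρ) Filter.atTop
      (nhds ((k : ℝ) * a ^ 2)) := by
  set c := 2 * √((k : ℝ) - 1)
  have hz : Tendsto (fun ρ => ρ / a + c) atTop atTop :=
    tendsto_atTop_add_const_right _ _ (tendsto_id.atTop_div_const ha)
  have hlim := ((tendsto_sub_div_add_sqrt_sq_sub c (4 * k - 4)).comp hz).const_mul (2 * a ^ 2 * k)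
  rw [show 2 * a ^ 2 * k * (1 / 2) = (k : ℝ) * a ^ 2 by ring] at hlim
  refine hlim.congr' ?_
  filter_upwards [hz.eventually_gt_atTop (k : ℝ)] with ρ hρ
  rw [Q_eq_div_add_sqrt a ha.ne' k (by omega) ρ (ρ / a + c) rfl hρ, Function.comp_apply,
    add_sub_cancel_right, sub_sub_eq_add_sub, add_sub_right_comm]
  generalize √((ρ / a + c) ^ 2 - 4 * k + 4) = w
  field_simp
end

section
/- For every integer k ≥ 3 and every z ≥ 2√(k-1), with G(k,z) = -((k-2)·z - k·√(z² - 4k + 4))/(2·(z² - k²)), one has 2·√(z·G(k,z)) ≤ √8 · √((k-1)/(k-2)) ≤ 4. -/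
/-!
Rationalising the numerator of `G` turns it into `2 (k - 1) / (k √(z² - 4k + 4) + (k - 2) z)`,
whose denominator is at least `(k - 2) z`; hence `z G(k, z) ≤ 2 (k - 1) / (k - 2)`, and this
ratio is at most `4` once `k ≥ 3`.
-/

open Real

lemma G_of_sq_eq {k : ℕ} {z : ℝ} (h : z ^ 2 = (k : ℝ) ^ 2) : G k z = 0 := by
  rw [G, h, sub_self, mul_zero, div_zero]

lemma G_eq_div {k : ℕ} {z : ℝ} (hdisc : 4 * ((k : ℝ) - 1) ≤ z ^ 2) (hzk : z ^ 2 ≠ (k : ℝ) ^ 2)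
    (hD : k * √(z ^ 2 - 4 * k + 4) + (k - 2) * z ≠ 0) :
    G k z = 2 * (k - 1) / (k * √(z ^ 2 - 4 * k + 4) + (k - 2) * z) := by
  have hs : √(z ^ 2 - 4 * k + 4) ^ 2 = z ^ 2 - 4 * k + 4 := sq_sqrt (by linarith)
  rw [G, div_eq_div_iff (mul_ne_zero two_ne_zero (sub_ne_zero.mpr hzk)) hD]
  linear_combination (k : ℝ) ^ 2 * hs

lemma mul_G_le {k : ℕ} {z : ℝ} (hk : 2 < (k : ℝ)) (hz : 0 < z)
    (hdisc : 4 * ((k : ℝ) - 1) ≤ z ^ 2) :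
    z * G k z ≤ 2 * (k - 1) / (k - 2) := by
  have hk2 : 0 < (k : ℝ) - 2 := by linarith
  by_cases hzk : z ^ 2 = (k : ℝ) ^ 2
  · rw [G_of_sq_eq hzk, mul_zero]
    exact div_nonneg (by linarith) hk2.le
  set s := √(z ^ 2 - 4 * k + 4)
  have hks : 0 ≤ k * s := mul_nonneg (Nat.cast_nonneg k) (sqrt_nonneg _)
  have hD : 0 < k * s + (k - 2) * z := by positivity
  rw [G_eq_div hdisc hzk hD.ne', ← mul_div_assoc, div_le_div_iff₀ hD hk2]
  nlinarith [mul_nonneg (by linarith : (0 : ℝ) ≤ 2 * (k - 1)) hks]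

lemma sqrt_eight_mul_sqrt (x : ℝ) : √8 * √x = 2 * √(2 * x) := by
  rw [sqrt_mul zero_le_two, ← mul_assoc, show (8 : ℝ) = 2 ^ 2 * 2 by norm_num,
    sqrt_mul (by positivity), sqrt_sq zero_le_two]

theorem sqrt_zG_bound (k : ℕ) (hk : 3 ≤ k) (z : ℝ) (hz : 2 * Real.sqrt ((k : ℝ) - 1) ≤ z) :
    2 * Real.sqrt (z * G k z) ≤ Real.sqrt 8 * Real.sqrt (((k : ℝ) - 1) / ((k : ℝ) - 2)) ∧
    Real.sqrt 8 * Real.sqrt (((k : ℝ) - 1) / ((k : ℝ) - 2)) ≤ 4 := by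
  have hk3 : (3 : ℝ) ≤ k := by exact_mod_cast hk
  have hk1 : 0 < (k : ℝ) - 1 := by linarith
  have hz0 : 0 < z := lt_of_lt_of_le (by positivity) hz
  have hdisc : 4 * ((k : ℝ) - 1) ≤ z ^ 2 := by
    nlinarith [sq_sqrt hk1.le, sqrt_nonneg ((k : ℝ) - 1)]
  have hratio : ((k : ℝ) - 1) / (k - 2) ≤ 2 := by
    rw [div_le_iff₀ (by linarith)]; linarith
  rw [sqrt_eight_mul_sqrt]
  constructor
  · gcongr 2 * √?_
    linarith [mul_G_le (by linarith) hz0 hdisc, mul_div_assoc (2 : ℝ) ((k : ℝ) - 1) (k - 2)]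
  · calc 2 * √(2 * (((k : ℝ) - 1) / (k - 2))) ≤ 2 * √(2 ^ 2) := by gcongr; linarith
      _ = 4 := by rw [sqrt_sq zero_le_two]; norm_num
end
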